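/- arXiv:1604.03544 — 5 statements merged into one kernel-verified Lean document; each statement's English description precedes it below -/
import Mathlib

section
/- Let M be an m × m matrix over a commutative ring and let N be the 2m × 2m block matrix with zero diagonal blocks and off-diagonal blocks M and Mᵀ, i.e. N = [[0, M],[Mᵀ, 0]]. If p is the characteristic polynomial of N and p' the characteristic polynomial of MᵀM, then p(x) = p'(x²). -/
open Matrix Polynomial

/-- If `N = [[0, M],[Mᵀ, 0]]` and `p`, `p'` are the characteristic
polynomials of `N` and of `MᵀM`, then `p(x) = p'(x²)`. -/
theorem stmt_5 (m : ℕ) (R : Type) [CommRing R] (M : Matrix (Fin m) (Fin m) R) :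
    (Matrix.fromBlocks 0 M Mᵀ 0).charpoly = (Mᵀ * M).charpoly.comp (Polynomial.X ^ 2) := by
  classical
  set A : Matrix (Fin m ⊕ Fin m) (Fin m ⊕ Fin m) R[X] :=
    charmatrix (Matrix.fromBlocks 0 M Mᵀ 0) with hA
  have hAblocks : A = Matrix.fromBlocks (Matrix.scalar (Fin m) (X : R[X])) (-(M.map C))
      (-(Mᵀ.map C)) (Matrix.scalar (Fin m) (X : R[X])) := by
    rw [hA, charmatrix_fromBlocks]
    simp [charmatrix]
  set E : Matrix (Fin m ⊕ Fin m) (Fin m ⊕ Fin m) R[X] :=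
    Matrix.fromBlocks 1 (M.map C) 0 (Matrix.scalar (Fin m) (X : R[X])) with hE
  set T : Matrix (Fin m) (Fin m) R[X] :=
    Matrix.scalar (Fin m) ((X : R[X]) ^ 2) - ((Mᵀ * M).map C) with hT
  have hmapmul : Mᵀ.map (C : R →+* R[X]) * M.map (C : R →+* R[X]) = (Mᵀ * M).map C :=
    (Matrix.map_mul).symm
  have hmul : A * E = Matrix.fromBlocks (Matrix.scalar (Fin m) (X : R[X])) 0
      (-(Mᵀ.map C)) T := by
    have h11 : Matrix.scalar (Fin m) (X : R[X]) * 1 + (-(M.map C)) * 0 =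
        Matrix.scalar (Fin m) (X : R[X]) := by simp
    have h12 : Matrix.scalar (Fin m) (X : R[X]) * M.map C +
        (-(M.map C)) * Matrix.scalar (Fin m) (X : R[X]) = 0 := by
      rw [(Matrix.scalar_commute (X : R[X]) (fun r => Commute.all _ _) (M.map C)).eq]
      rw [neg_mul, add_neg_cancel]
    have h21 : (-(Mᵀ.map C)) * 1 + Matrix.scalar (Fin m) (X : R[X]) * 0 = -(Mᵀ.map C) := by
      simp
    have h22 : (-(Mᵀ.map C)) * M.map C +
        Matrix.scalar (Fin m) (X : R[X]) * Matrix.scalar (Fin m) (X : R[X]) = T := by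
      rw [← map_mul (Matrix.scalar (Fin m)), ← sq, neg_mul, hmapmul, hT]
      rw [neg_add_eq_sub]
    rw [hAblocks, hE, Matrix.fromBlocks_multiply, h11, h12, h21, h22]
  have hdetE : E.det = (X : R[X]) ^ m := by
    rw [hE, Matrix.det_fromBlocks_zero₂₁]
    simp [Matrix.scalar, Matrix.det_diagonal]
  have hdetAE : A.det * (X : R[X]) ^ m = (X : R[X]) ^ m * T.det := by
    have := congrArg Matrix.det hmul
    rw [Matrix.det_mul, hdetE, Matrix.det_fromBlocks_zero₁₂] at this
    rw [this]
    congr 1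
    simp [Matrix.scalar, Matrix.det_diagonal]
  have hTdet : T.det = (Mᵀ * M).charpoly.comp (Polynomial.X ^ 2) := by
    have hcomp : (Mᵀ * M).charpoly.comp (Polynomial.X ^ 2) =
        Polynomial.eval₂RingHom (Polynomial.C : R →+* R[X]) ((X : R[X]) ^ 2)
          (Mᵀ * M).charpoly := by
      simp [Polynomial.comp, Polynomial.eval₂RingHom]
    rw [hcomp, Matrix.charpoly, RingHom.map_det]
    congr 1
    ext i j
    rcases eq_or_ne i j with h | h
    · subst h
      simp only [RingHom.mapMatrix_apply, Matrix.map_apply, Matrix.charmatrix_apply_eq,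
        coe_eval₂RingHom, eval₂_sub, eval₂_X, eval₂_C, hT, Matrix.sub_apply,
        Matrix.scalar_apply, Matrix.diagonal_apply_eq]
    · simp only [RingHom.mapMatrix_apply, Matrix.map_apply, Matrix.charmatrix_apply_ne _ _ _ h,
        coe_eval₂RingHom, eval₂_neg, eval₂_C, hT, Matrix.sub_apply, Matrix.scalar_apply,
        Matrix.diagonal_apply_ne _ h, zero_sub]
  have hreg : Function.Injective fun p : R[X] => (X : R[X]) ^ m * p :=
    (Polynomial.monic_X_pow m).isRegular.left
  have : (X : R[X]) ^ m * (Matrix.fromBlocks 0 M Mᵀ 0).charpoly =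
      (X : R[X]) ^ m * (Mᵀ * M).charpoly.comp (Polynomial.X ^ 2) := by
    rw [Matrix.charpoly, ← hA, mul_comm, hdetAE, hTdet]
  exact hreg this
end

section
/- Let p₁, …, p_m be real-rooted monic polynomials of the same degree n such that every pair has a common interlacing, and let p = Σᵢ cᵢ pᵢ with all cᵢ > 0 and Σ cᵢ = 1. Then there exists an index i such that the largest root of pᵢ is at most the largest root of p. -/
open Polynomial

/-- Two real-rooted degree-`n` polynomials `f`, `g` have a common interlacing if there are
real numbers `t₀ ≤ t₁ ≤ … ≤ t_n` such that, for each `j`, the `j`-th smallest roots of `f`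
and of `g` (listed in increasing order with multiplicity) lie in `[t_{j-1}, t_j]`. -/
def CommonInterlacing (n : ℕ) (f g : Polynomial ℝ) : Prop :=
  ∃ t : Fin (n + 1) → ℝ, Monotone t ∧
    ∃ rf rg : Fin n → ℝ, Monotone rf ∧ Monotone rg ∧
      f.roots = Multiset.map rf Finset.univ.val ∧
      g.roots = Multiset.map rg Finset.univ.val ∧
      ∀ j : Fin n,
        t j.castSucc ≤ rf j ∧ rf j ≤ t j.succ ∧ t j.castSucc ≤ rg j ∧ rg j ≤ t j.succ

/-- If `p₁, …, p_N` are monic real-rooted polynomials of degree `n` having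
pairwise common interlacings, and `p = Σ cᵢ pᵢ` is a convex combination with positive
weights, then some `pᵢ` has largest root at most the largest root of `p` (i.e. every root
of `pᵢ` is at most some root of `p`). -/
theorem stmt_8 (n N : ℕ) (hN : 0 < N) (p : Fin N → Polynomial ℝ)
    (hmonic : ∀ i, (p i).Monic) (hdeg : ∀ i, (p i).natDegree = n)
    (hsplit : ∀ i, (p i).Splits)
    (hint : ∀ i j, i ≠ j → CommonInterlacing n (p i) (p j))
    (c : Fin N → ℝ) (hc : ∀ i, 0 < c i) (hsum : ∑ i, c i = 1) :
    ∃ i, ∀ x ∈ (p i).roots, ∃ y ∈ (∑ i, c i • p i).roots, x ≤ y := by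
  have hcard : ∀ j, Multiset.card (p j).roots = n := by
    intro j
    rw [← hdeg j]
    exact splits_iff_card_roots.mp (hsplit j)
  rcases n with _ | m
  · refine ⟨⟨0, hN⟩, fun x hx => absurd hx ?_⟩
    have h0 : (p ⟨0, hN⟩).roots = 0 := Multiset.card_eq_zero.mp (hcard _)
    simp [h0]
  · set P := ∑ i, c i • p i with hP
    have hroots_ne : ∀ j, (p j).roots ≠ 0 := by
      intro j h
      have := hcard j
      rw [h] at this
      simp at this
    have hFne : ∀ j, (p j).roots.toFinset.Nonempty :=
      fun j => Multiset.toFinset_nonempty.mpr (hroots_ne j)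
    set lam : Fin N → ℝ := fun j => (p j).roots.toFinset.max' (hFne j) with hlam
    have hlam_mem : ∀ j, lam j ∈ (p j).roots := by
      intro j
      have := (p j).roots.toFinset.max'_mem (hFne j)
      rwa [Multiset.mem_toFinset] at this
    have hlam_le : ∀ j, ∀ x ∈ (p j).roots, x ≤ lam j := by
      intro j x hx
      exact (p j).roots.toFinset.le_max' x (Multiset.mem_toFinset.mpr hx)
    obtain ⟨i, -, hmin⟩ := Finset.exists_min_image Finset.univ lam
      (Finset.univ_nonempty_iff.mpr ⟨⟨0, hN⟩⟩)
    set A := lam i with hA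
    -- each p j is nonpositive at A
    have hval : ∀ j, eval A (p j) ≤ 0 := by
      intro j
      by_cases hij : j = i
      · subst hij
        have : IsRoot (p j) A := isRoot_of_mem_roots (hlam_mem j)
        rw [IsRoot] at this
        rw [this]
      · obtain ⟨t, ht, rf, rg, hrf, hrg, hfi, hgj, hcond⟩ := hint i j (Ne.symm hij)
        have jm : Fin (m + 1) := Fin.last m
        -- rf (last) is a root of p i hence ≤ A
        have hrfA : rf (Fin.last m) ≤ A := by
          apply hlam_le i
          rw [hfi]
          exact Multiset.mem_map.mpr ⟨Fin.last m, Finset.mem_univ_val _, rfl⟩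
        -- all non-last rg values ≤ A
        have hrg_le : ∀ k : Fin (m + 1), k ≠ Fin.last m → rg k ≤ A := by
          intro k hk
          have hk' : (k : ℕ) < m := lt_of_le_of_ne (Nat.lt_succ_iff.mp k.isLt)
            (fun h => hk (Fin.ext h))
          have h1 : rg k ≤ t k.succ := (hcond k).2.2.2
          have h2 : t k.succ ≤ t (Fin.last m).castSucc := by
            apply ht
            rw [Fin.le_def]
            simpa using hk'
          have h3 : t (Fin.last m).castSucc ≤ rf (Fin.last m) := (hcond (Fin.last m)).1
          linarith
        -- rg (last) ≥ A
        have hrg_ge : A ≤ rg (Fin.last m) := by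
          have h1 : A ≤ lam j := hmin j (Finset.mem_univ j)
          obtain ⟨k, -, hk⟩ := Multiset.mem_map.mp (by rw [← hgj]; exact hlam_mem j)
          calc A ≤ lam j := h1
            _ = rg k := hk.symm
            _ ≤ rg (Fin.last m) := hrg (Fin.le_last k)
        -- compute eval
        have heq : eval A (p j) = ∏ k : Fin (m + 1), (A - rg k) := by
          conv_lhs => rw [(hsplit j).eq_prod_roots_of_monic (hmonic j)]
          rw [eval_multiset_prod, Multiset.map_map, hgj, Multiset.map_map]
          simp [Finset.prod, Function.comp]
        rw [heq, ← Finset.mul_prod_erase Finset.univ _ (Finset.mem_univ (Fin.last m))]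
        apply mul_nonpos_of_nonpos_of_nonneg
        · linarith [hrg_ge]
        · apply Finset.prod_nonneg
          intro k hk
          have := hrg_le k (Finset.ne_of_mem_erase hk)
          linarith
    -- P is nonpositive at A
    have hPA : eval A P ≤ 0 := by
      rw [hP, eval_finset_sum]
      apply Finset.sum_nonpos
      intro j _
      rw [smul_eq_C_mul, eval_mul, eval_C]
      exact mul_nonpos_of_nonneg_of_nonpos (hc j).le (hval j)
    -- P is monic of degree m+1
    have hPcoeff : P.coeff (m + 1) = 1 := by
      rw [hP, finset_sum_coeff]
      have : ∀ j : Fin N, (c j • p j).coeff (m + 1) = c j := by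
        intro j
        rw [coeff_smul]
        have : (p j).coeff (m + 1) = 1 := by
          have := (hmonic j).leadingCoeff
          rwa [leadingCoeff, hdeg j] at this
        rw [this, smul_eq_mul, mul_one]
      simp_rw [this]
      exact hsum
    have hPdegle : P.natDegree ≤ m + 1 := by
      rw [hP]
      apply natDegree_sum_le_of_forall_le
      intro j _
      exact le_trans (natDegree_smul_le _ _) (le_of_eq (hdeg j))
    have hPne : P ≠ 0 := fun h => by simp [h] at hPcoeff
    have hPdeg : P.natDegree = m + 1 :=
      le_antisymm hPdegle (le_natDegree_of_ne_zero (by rw [hPcoeff]; norm_num))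
    have hPmonic : P.Monic := by
      rw [Monic, leadingCoeff, hPdeg, hPcoeff]
    have hPdegpos : 0 < P.degree := natDegree_pos_iff_degree_pos.mp (by omega)
    have htend : Filter.Tendsto (fun x => eval x P) Filter.atTop Filter.atTop :=
      P.tendsto_atTop_of_leadingCoeff_nonneg hPdegpos (by rw [hPmonic]; norm_num)
    obtain ⟨b, hb1, hbA⟩ :=
      ((htend.eventually_ge_atTop 1).and (Filter.eventually_ge_atTop A)).exists
    have hsub : Set.Icc (eval A P) (eval b P) ⊆ (fun x => eval x P) '' Set.Icc A b :=
      intermediate_value_Icc hbA (P.continuous_aeval.continuousOn)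
    have h0mem : (0 : ℝ) ∈ Set.Icc (eval A P) (eval b P) := ⟨hPA, by linarith⟩
    obtain ⟨y, hy, hy0⟩ := hsub h0mem
    refine ⟨i, fun x hx => ⟨y, ?_, ?_⟩⟩
    · rw [mem_roots hPne]
      exact hy0
    · exact le_trans (hlam_le i x hx) (le_trans hy.1 (le_refl y))
end

section
/- Let f and g be monic real-rooted polynomials of degree n with a common interlacing. Then every convex combination λf + (1−λ)g with λ ∈ [0,1] is real-rooted. -/
open Polynomial

section AuxiliaryLemmas
open Finset

/-- IVT root helper -/
lemma exists_root_Ioo_aux (p : Polynomial ℝ) {a b : ℝ} (hab : a < b)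
    (hsign : p.eval a * p.eval b < 0) : ∃ x ∈ Set.Ioo a b, p.eval x = 0 := by
  have hc : ContinuousOn (fun x => p.eval x) (Set.Icc a b) :=
    (p.continuous_aeval).continuousOn
  rcases lt_or_ge (p.eval a) 0 with ha | ha
  · have hb : 0 < p.eval b := by nlinarith
    have : (0:ℝ) ∈ Set.Ioo (p.eval a) (p.eval b) := ⟨ha, hb⟩
    obtain ⟨x, hx, hx0⟩ := intermediate_value_Ioo hab.le hc this
    exact ⟨x, hx, hx0⟩
  · have ha' : 0 < p.eval a := by
      rcases ha.lt_or_eq with h | h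
      · exact h
      · rw [← h] at hsign; nlinarith
    have hb : p.eval b < 0 := by nlinarith
    have : (0:ℝ) ∈ Set.Ioo (p.eval b) (p.eval a) := ⟨hb, ha'⟩
    obtain ⟨x, hx, hx0⟩ := intermediate_value_Ioo' hab.le hc this
    exact ⟨x, hx, hx0⟩

/-- product sign decomposition -/
lemma prod_sign_decomp (N i : ℕ) (u : ℕ → ℝ) (x : ℝ) (hiN : i ≤ N) :
    (-1:ℝ)^(N - i) * ∏ k ∈ range N, (x - u k) =
      (∏ k ∈ range i, (x - u k)) * ∏ k ∈ Ico i N, (u k - x) := by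
  have h1 : ∏ k ∈ Ico i N, (u k - x) = (-1:ℝ)^(N-i) * ∏ k ∈ Ico i N, (x - u k) := by
    have : ∀ k ∈ Ico i N, (u k - x) = (-1) * (x - u k) := by intro k _; ring
    rw [Finset.prod_congr rfl this, Finset.prod_mul_distrib]
    simp [Nat.card_Ico]
  rw [h1, ← Finset.prod_range_mul_prod_Ico _ hiN]
  ring
lemma prod_sign_nonneg (N i : ℕ) (u : ℕ → ℝ) (x : ℝ) (hiN : i ≤ N)
    (hle : ∀ k, k < i → u k ≤ x) (hge : ∀ k, i ≤ k → k < N → x ≤ u k) :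
    0 ≤ (-1:ℝ)^(N - i) * ∏ k ∈ range N, (x - u k) := by
  have h1 : ∏ k ∈ Ico i N, (u k - x) = (-1:ℝ)^(N-i) * ∏ k ∈ Ico i N, (x - u k) := by
    have : ∀ k ∈ Ico i N, (u k - x) = (-1) * (x - u k) := by intro k _; ring
    rw [Finset.prod_congr rfl this, Finset.prod_mul_distrib]
    simp [Nat.card_Ico]
  have hdec : (-1:ℝ)^(N - i) * ∏ k ∈ range N, (x - u k) =
      (∏ k ∈ range i, (x - u k)) * ∏ k ∈ Ico i N, (u k - x) := by
    rw [h1, ← Finset.prod_range_mul_prod_Ico _ hiN]; ring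
  rw [hdec]
  apply mul_nonneg
  · exact Finset.prod_nonneg fun k hk => by
      have := hle k (Finset.mem_range.mp hk); linarith
  · exact Finset.prod_nonneg fun k hk => by
      have hk' := Finset.mem_Ico.mp hk
      have := hge k hk'.1 hk'.2; linarith

lemma prod_sign_zero (N i : ℕ) (u : ℕ → ℝ) (x : ℝ) (hiN : i ≤ N)
    (h0 : (-1:ℝ)^(N - i) * ∏ k ∈ range N, (x - u k) = 0) :
    ∃ k, k < N ∧ u k = x := by
  have : ∏ k ∈ range N, (x - u k) = 0 := by
    rcases mul_eq_zero.mp h0 with h | h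
    · exfalso; exact pow_ne_zero _ (by norm_num) h
    · exact h
  obtain ⟨k, hk, hk0⟩ := Finset.prod_eq_zero_iff.mp this
  exact ⟨k, Finset.mem_range.mp hk, by linarith⟩

lemma combo_monic (N : ℕ) (l : ℝ) (F G : Polynomial ℝ) (hF : F.Monic) (hG : G.Monic)
    (hFd : F.natDegree = N) (hGd : G.natDegree = N) :
    (l • F + (1 - l) • G).Monic ∧ (l • F + (1 - l) • G).natDegree = N := by
  have hc : (l • F + (1 - l) • G).coeff N = 1 := by
    rw [Polynomial.coeff_add, Polynomial.coeff_smul, Polynomial.coeff_smul]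
    have h1 : F.coeff N = 1 := by rw [← hFd]; exact hF.coeff_natDegree
    have h2 : G.coeff N = 1 := by rw [← hGd]; exact hG.coeff_natDegree
    rw [h1, h2]; simp
  have hd : (l • F + (1 - l) • G).natDegree ≤ N := by
    apply le_trans (Polynomial.natDegree_add_le _ _)
    simp only [sup_le_iff]
    exact ⟨le_trans (Polynomial.natDegree_smul_le _ _) hFd.le,
           le_trans (Polynomial.natDegree_smul_le _ _) hGd.le⟩
  have hm := Polynomial.monic_of_natDegree_le_of_coeff_eq_one N hd hc
  refine ⟨hm, le_antisymm hd (Polynomial.le_natDegree_of_ne_zero (by rw [hc]; norm_num))⟩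

lemma prod_extract {M : Type*} [CommMonoid M] (f : ℕ → M) (N p : ℕ) (hp : p ≤ N) :
    ∏ k ∈ range (N+1), f k = f p * ∏ k ∈ range N, f (if k < p then k else k+1) := by
  have hsplit : ∏ k ∈ range N, f (if k < p then k else k+1)
      = (∏ k ∈ range p, f k) * ∏ k ∈ Ico p N, f (k+1) := by
    rw [← Finset.prod_range_mul_prod_Ico _ hp]
    congr 1
    · exact Finset.prod_congr rfl fun k hk => by
        rw [if_pos (Finset.mem_range.mp hk)]
    · exact Finset.prod_congr rfl fun k hk => by
        rw [if_neg (by have := (Finset.mem_Ico.mp hk).1; omega)]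
  have h2 : ∏ k ∈ Ico p N, f (k+1) = ∏ k ∈ Ico (p+1) (N+1), f k := by
    rw [Finset.prod_Ico_eq_prod_range, Finset.prod_Ico_eq_prod_range]
    simp only [Nat.succ_sub_succ]
    exact Finset.prod_congr rfl fun k _ => by ring_nf
  rw [hsplit, h2, ← Finset.prod_range_mul_prod_Ico f (Nat.le_succ_of_le hp),
    Finset.prod_eq_prod_Ico_succ_bot (Nat.lt_succ_of_le hp) f]
  simp only [Nat.succ_eq_add_one, Nat.add_comm]
  exact mul_left_comm _ _ _
lemma no_common_case (l : ℝ) (hl0 : 0 < l) (hl1 : l < 1) (M : ℕ) (hM : 0 < M)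
    (u v : ℕ → ℝ)
    (hu : ∀ i j, i ≤ j → j < M → u i ≤ u j)
    (hv : ∀ i j, i ≤ j → j < M → v i ≤ v j)
    (hx : ∀ i, i + 1 < M → v i ≤ u (i+1) ∧ u i ≤ v (i+1))
    (hnc : ¬ ∃ p q, p < M ∧ q < M ∧ u p = v q) :
    Splits
      (l • ∏ k ∈ range M, (X - C (u k)) + (1-l) • ∏ k ∈ range M, (X - C (v k))) := by
  set F : Polynomial ℝ := ∏ k ∈ range M, (X - C (u k)) with hF
  set G : Polynomial ℝ := ∏ k ∈ range M, (X - C (v k)) with hG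
  set h : Polynomial ℝ := l • F + (1-l) • G with hh
  have hFm : F.Monic := monic_prod_of_monic _ _ fun k _ => monic_X_sub_C _
  have hGm : G.Monic := monic_prod_of_monic _ _ fun k _ => monic_X_sub_C _
  have hFd : F.natDegree = M := by
    rw [hF, natDegree_prod _ _ fun k _ => (monic_X_sub_C (u k)).ne_zero]
    simp [natDegree_X_sub_C]
  have hGd : G.natDegree = M := by
    rw [hG, natDegree_prod _ _ fun k _ => (monic_X_sub_C (v k)).ne_zero]
    simp [natDegree_X_sub_C]
  obtain ⟨hhm, hhd⟩ := combo_monic M l F G hFm hGm hFd hGd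
  -- evaluation formula
  have heval : ∀ x : ℝ, h.eval x =
      l * (∏ k ∈ range M, (x - u k)) + (1-l) * (∏ k ∈ range M, (x - v k)) := by
    intro x
    simp [hh, hF, hG, eval_prod, smul_eq_mul]
  -- the separating points
  set s : ℕ → ℝ := fun i => if i = 0 then min (u 0) (v 0) - 1 else max (u (i-1)) (v (i-1))
    with hs
  -- sign claim
  have hsign : ∀ i, i ≤ M → 0 < (-1:ℝ)^(M-i) * h.eval (s i) := by
    intro i hiM
    have hule : ∀ k, k < i → u k ≤ s i := by
      intro k hk
      have hi0 : i ≠ 0 := by omega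
      simp only [hs, if_neg hi0]
      exact le_trans (hu k (i-1) (by omega) (by omega)) (le_max_left _ _)
    have hvle : ∀ k, k < i → v k ≤ s i := by
      intro k hk
      have hi0 : i ≠ 0 := by omega
      simp only [hs, if_neg hi0]
      exact le_trans (hv k (i-1) (by omega) (by omega)) (le_max_right _ _)
    have huge : ∀ k, i ≤ k → k < M → s i ≤ u k := by
      intro k hik hkM
      rcases Nat.eq_zero_or_pos i with h0 | h0
      · subst h0
        simp only [hs, if_pos rfl]
        have := hu 0 k (Nat.zero_le _) hkM
        have := min_le_left (u 0) (v 0)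
        linarith
      · have hi0 : i ≠ 0 := by omega
        simp only [hs, if_neg hi0]
        apply max_le
        · exact hu (i-1) k (by omega) hkM
        · exact le_trans (hx (i-1) (by omega)).1 (by
            have : i - 1 + 1 = i := by omega
            rw [this]
            exact hu i k hik hkM)
    have hvge : ∀ k, i ≤ k → k < M → s i ≤ v k := by
      intro k hik hkM
      rcases Nat.eq_zero_or_pos i with h0 | h0
      · subst h0
        simp only [hs, if_pos rfl]
        have := hv 0 k (Nat.zero_le _) hkM
        have := min_le_right (u 0) (v 0)
        linarith
      · have hi0 : i ≠ 0 := by omega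
        simp only [hs, if_neg hi0]
        apply max_le
        · exact le_trans (hx (i-1) (by omega)).2 (by
            have : i - 1 + 1 = i := by omega
            rw [this]
            exact hv i k hik hkM)
        · exact hv (i-1) k (by omega) hkM
    have hA := prod_sign_nonneg M i u (s i) hiM hule huge
    have hB := prod_sign_nonneg M i v (s i) hiM hvle hvge
    have hcomb : (-1:ℝ)^(M-i) * h.eval (s i) =
        l * ((-1:ℝ)^(M-i) * ∏ k ∈ range M, (s i - u k)) +
        (1-l) * ((-1:ℝ)^(M-i) * ∏ k ∈ range M, (s i - v k)) := by
      rw [heval]; ring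
    rcases lt_or_ge 0 ((-1:ℝ)^(M-i) * h.eval (s i)) with hpos | hnonpos
    · exact hpos
    · exfalso
      have hzA : (-1:ℝ)^(M-i) * ∏ k ∈ range M, (s i - u k) = 0 := by nlinarith
      have hzB : (-1:ℝ)^(M-i) * ∏ k ∈ range M, (s i - v k) = 0 := by nlinarith
      obtain ⟨p, hpM, hpu⟩ := prod_sign_zero M i u (s i) hiM hzA
      obtain ⟨q, hqM, hqv⟩ := prod_sign_zero M i v (s i) hiM hzB
      exact hnc ⟨p, q, hpM, hqM, by rw [hpu, hqv]⟩
  -- separation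
  have hslt : ∀ i, i < M → s i < s (i+1) := by
    intro i hiM
    have hle : s i ≤ s (i+1) := by
      rcases Nat.eq_zero_or_pos i with h0 | h0
      · subst h0
        simp only [hs, if_pos rfl, if_neg (Nat.one_ne_zero)]
        have := le_max_left (u 0) (v 0)
        have := min_le_left (u 0) (v 0)
        simp only [Nat.sub_self]
        linarith
      · have hi0 : i ≠ 0 := by omega
        simp only [hs, if_neg hi0, if_neg (by omega : i + 1 ≠ 0), Nat.add_sub_cancel]
        apply max_le
        · exact le_trans (hu (i-1) i (by omega) hiM) (le_max_left _ _)
        · exact le_trans (hv (i-1) i (by omega) hiM) (le_max_right _ _)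
    rcases hle.lt_or_eq with hlt | heq
    · exact hlt
    · exfalso
      have e1 := hsign i (le_of_lt hiM)
      have e2 := hsign (i+1) hiM
      rw [← heq] at e2
      have hMi : M - i = (M - (i+1)) + 1 := by omega
      rw [hMi, pow_succ] at e1
      nlinarith
  -- roots in each gap
  have hroots : ∀ i : Fin M, ∃ x, x ∈ Set.Ioo (s i) (s (i+1)) ∧ h.eval x = 0 := by
    intro i
    have hiM := i.isLt
    have e1 := hsign i (le_of_lt hiM)
    have e2 := hsign (i+1) hiM
    have hMi : M - (i:ℕ) = (M - ((i:ℕ)+1)) + 1 := by omega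
    rw [hMi, pow_succ] at e1
    have ha : ((-1:ℝ) ^ (M - ((i:ℕ)+1))) * ((-1:ℝ) ^ (M - ((i:ℕ)+1))) = 1 := by
      rw [← pow_add]
      exact Even.neg_one_pow ⟨M - ((i:ℕ)+1), rfl⟩
    have hprod : h.eval (s i) * h.eval (s (i+1)) < 0 := by nlinarith [mul_pos e1 e2]
    obtain ⟨x, hx, h0⟩ := exists_root_Ioo_aux h (hslt i hiM) hprod
    exact ⟨x, hx, h0⟩
  choose ρ hρmem hρ0 using hroots
  have smono : ∀ a b : ℕ, a ≤ b → b ≤ M → s a ≤ s b := by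
    intro a b hab hbM
    induction b with
    | zero => simp at hab; rw [hab]
    | succ b ih =>
      rcases Nat.lt_or_ge a (b+1) with hlt | hge
      · exact le_trans (ih (by omega) (by omega)) (hslt b (by omega)).le
      · have : a = b + 1 := by omega
        rw [this]
  have hinj : Set.InjOn (fun i : Fin M => ρ i) ↑(univ : Finset (Fin M)) := by
    intro i _ j _ hij
    by_contra hne
    have hmono : ∀ a b : Fin M, (a:ℕ) < (b:ℕ) → ρ a < ρ b := by
      intro a b hab
      calc ρ a < s ((a:ℕ)+1) := (hρmem a).2
        _ ≤ s (b:ℕ) := smono _ _ (by omega) (le_of_lt b.isLt)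
        _ < ρ b := (hρmem b).1
    rcases Nat.lt_trichotomy (i:ℕ) (j:ℕ) with h | h | h
    · exact absurd hij (ne_of_lt (hmono i j h))
    · exact hne (Fin.ext h)
    · exact absurd hij.symm (ne_of_lt (hmono j i h))
  have hne0 : h ≠ 0 := hhm.ne_zero
  have hmaps : ∀ i ∈ (univ : Finset (Fin M)), ρ i ∈ h.roots.toFinset := by
    intro i _
    rw [Multiset.mem_toFinset, Polynomial.mem_roots hne0]
    exact hρ0 i
  have hcard : M ≤ Multiset.card h.roots := by
    calc M = (univ : Finset (Fin M)).card := by simp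
      _ ≤ h.roots.toFinset.card := Finset.card_le_card_of_injOn _ hmaps hinj
      _ ≤ Multiset.card h.roots := Multiset.toFinset_card_le _
  rw [Polynomial.splits_iff_card_roots]
  rw [hhd]
  exact le_antisymm (by rw [← hhd]; exact Polynomial.card_roots' h) hcard
lemma mono_removed (N : ℕ) (u : ℕ → ℝ) (p : ℕ) (hpN : p ≤ N)
    (hu : ∀ i j, i ≤ j → j < N + 1 → u i ≤ u j) :
    ∀ i j, i ≤ j → j < N → u (if i < p then i else i+1) ≤ u (if j < p then j else j+1) := by
  intro i j hij hjN
  by_cases hj : j < p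
  · rw [if_pos hj, if_pos (by omega)]
    exact hu i j hij (by omega)
  · rw [if_neg hj]
    by_cases hi : i < p
    · rw [if_pos hi]; exact hu i (j+1) (by omega) (by omega)
    · rw [if_neg hi]; exact hu (i+1) (j+1) (by omega) (by omega)

lemma cross_removed (N : ℕ) (u v : ℕ → ℝ) (ρ : ℝ) (p q : ℕ)
    (hu : ∀ i j, i ≤ j → j < N + 1 → u i ≤ u j)
    (hv : ∀ i j, i ≤ j → j < N + 1 → v i ≤ v j)
    (hx : ∀ i, i + 1 < N + 1 → v i ≤ u (i+1))
    (hpN : p ≤ N) (hqN : q ≤ N) (hup : u p = ρ) (hvq : v q = ρ)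
    (hqmax : ∀ k, k ≤ N → v k = ρ → k ≤ q) :
    ∀ i, i + 1 < N → v (if i < q then i else i+1) ≤ u (if i+1 < p then i+1 else i+2) := by
  intro i hiN
  by_cases hiq : i < q
  · rw [if_pos hiq]
    by_cases hip : i + 1 < p
    · rw [if_pos hip]; exact hx i (by omega)
    · rw [if_neg hip]
      exact le_trans (hv i (i+1) (by omega) (by omega)) (hx (i+1) (by omega))
  · rw [if_neg hiq]
    by_cases hip : i + 1 < p
    · rw [if_pos hip]
      exfalso
      have h1 : v (i+1) ≤ ρ := by
        rcases Nat.exists_eq_add_of_lt hip with ⟨c, hc⟩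
        have hvp1 : v (p-1) ≤ u p := by
          have := hx (p-1) (by omega)
          have hpp : p - 1 + 1 = p := by omega
          rwa [hpp] at this
        calc v (i+1) ≤ v (p-1) := hv (i+1) (p-1) (by omega) (by omega)
          _ ≤ u p := hvp1
          _ = ρ := hup
      have h2 : ρ ≤ v (i+1) := by
        rw [← hvq]; exact hv q (i+1) (by omega) (by omega)
      have : v (i+1) = ρ := le_antisymm h1 h2
      have := hqmax (i+1) (by omega) this
      omega
    · rw [if_neg hip]; exact hx (i+1) (by omega)

lemma main_comb (l : ℝ) (hl0 : 0 < l) (hl1 : l < 1) :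
    ∀ N (u v : ℕ → ℝ),
      (∀ i j, i ≤ j → j < N → u i ≤ u j) →
      (∀ i j, i ≤ j → j < N → v i ≤ v j) →
      (∀ i, i + 1 < N → v i ≤ u (i+1) ∧ u i ≤ v (i+1)) →
      Splits
        (l • ∏ k ∈ range N, (X - C (u k)) + (1-l) • ∏ k ∈ range N, (X - C (v k))) := by
  intro N
  induction N with
  | zero =>
    intro u v _ _ _
    simp only [range_zero, prod_empty]
    have h1 : l • (1:ℝ[X]) + (1-l) • (1:ℝ[X]) = 1 := by
      rw [smul_eq_C_mul, smul_eq_C_mul, mul_one, mul_one, ← C_add]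
      norm_num
    rw [h1]
    exact Splits.one
  | succ N ih =>
    intro u v hu hv hx
    by_cases hnc : ∃ p q, p < N+1 ∧ q < N+1 ∧ u p = v q
    · classical
      obtain ⟨p₀, q₀, hp₀, hq₀, heq⟩ := hnc
      set ρ : ℝ := u p₀ with hρ
      set p : ℕ := Nat.findGreatest (fun k => u k = ρ) N with hp
      set q : ℕ := Nat.findGreatest (fun k => v k = ρ) N with hq
      have hpN : p ≤ N := Nat.findGreatest_le N
      have hqN : q ≤ N := Nat.findGreatest_le N
      have hup : u p = ρ := Nat.findGreatest_spec (P := fun k => u k = ρ) (m := p₀) (n := N) (by omega) rfl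
      have hvq : v q = ρ := Nat.findGreatest_spec (P := fun k => v k = ρ) (m := q₀) (n := N) (by omega) heq.symm
      have hpmax : ∀ k, k ≤ N → u k = ρ → k ≤ p := fun k hk hkρ => Nat.le_findGreatest hk hkρ
      have hqmax : ∀ k, k ≤ N → v k = ρ → k ≤ q := fun k hk hkρ => Nat.le_findGreatest hk hkρ
      set u' : ℕ → ℝ := fun k => u (if k < p then k else k+1) with hu'def
      set v' : ℕ → ℝ := fun k => v (if k < q then k else k+1) with hv'def
      have hu' : ∀ i j, i ≤ j → j < N → u' i ≤ u' j := mono_removed N u p hpN hu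
      have hv' : ∀ i j, i ≤ j → j < N → v' i ≤ v' j := mono_removed N v q hqN hv
      have hx' : ∀ i, i + 1 < N → v' i ≤ u' (i+1) ∧ u' i ≤ v' (i+1) := by
        intro i hiN
        constructor
        · have := cross_removed N u v ρ p q hu hv (fun i hi => (hx i hi).1)
            hpN hqN hup hvq hqmax i hiN
          simpa [hu'def, hv'def] using this
        · have := cross_removed N v u ρ q p hv hu (fun i hi => (hx i hi).2)
            hqN hpN hvq hup hpmax i hiN
          simpa [hu'def, hv'def] using this
      have keyu : ∏ k ∈ range (N+1), (X - C (u k)) =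
          (X - C ρ) * ∏ k ∈ range N, (X - C (u' k)) := by
        rw [prod_extract (fun k => X - C (u k)) N p hpN, hup]
      have keyv : ∏ k ∈ range (N+1), (X - C (v k)) =
          (X - C ρ) * ∏ k ∈ range N, (X - C (v' k)) := by
        rw [prod_extract (fun k => X - C (v k)) N q hqN, hvq]
      rw [keyu, keyv, ← mul_smul_comm, ← mul_smul_comm, ← mul_add]
      exact Splits.mul (Splits.X_sub_C _) (ih u' v' hu' hv' hx')
    · exact no_common_case l hl0 hl1 (N+1) (Nat.succ_pos N) u v hu hv hx hnc

end AuxiliaryLemmas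

/-- Convex combinations of two monic real-rooted degree-`n` polynomials
with a common interlacing are real-rooted. -/
theorem stmt_9 (n : ℕ) (f g : Polynomial ℝ) (hf : f.Monic) (hg : g.Monic)
    (hfn : f.natDegree = n) (hgn : g.natDegree = n)
    (hfs : f.Splits) (hgs : g.Splits)
    (hint : CommonInterlacing n f g) (l : ℝ) (hl0 : 0 ≤ l) (hl1 : l ≤ 1) :
    (l • f + (1 - l) • g).Splits := by
  rcases eq_or_lt_of_le hl0 with h0 | h0
  · rw [← h0]
    simpa using hgs
  rcases eq_or_lt_of_le hl1 with h1 | h1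
  · rw [h1]
    simpa using hfs
  obtain ⟨t, ht, rf, rg, hrf, hrg, hfr, hgr, hj⟩ := hint
  classical
  set u : ℕ → ℝ := fun i => if h : i < n then rf ⟨i, h⟩ else 0 with hudef
  set v : ℕ → ℝ := fun i => if h : i < n then rg ⟨i, h⟩ else 0 with hvdef
  have hu : ∀ i j, i ≤ j → j < n → u i ≤ u j := by
    intro i j hij hjn
    simp only [hudef, dif_pos (lt_of_le_of_lt hij hjn), dif_pos hjn]
    exact hrf (Fin.mk_le_mk.mpr hij)
  have hv : ∀ i j, i ≤ j → j < n → v i ≤ v j := by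
    intro i j hij hjn
    simp only [hvdef, dif_pos (lt_of_le_of_lt hij hjn), dif_pos hjn]
    exact hrg (Fin.mk_le_mk.mpr hij)
  have hx : ∀ i, i + 1 < n → v i ≤ u (i+1) ∧ u i ≤ v (i+1) := by
    intro i hin
    have hi : i < n := by omega
    have hsc : (⟨i, hi⟩ : Fin n).succ = (⟨i+1, hin⟩ : Fin n).castSucc := by
      apply Fin.ext; simp
    constructor
    · simp only [hudef, hvdef, dif_pos hi, dif_pos hin]
      calc rg ⟨i, hi⟩ ≤ t (⟨i, hi⟩ : Fin n).succ := (hj ⟨i, hi⟩).2.2.2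
        _ = t (⟨i+1, hin⟩ : Fin n).castSucc := by rw [hsc]
        _ ≤ rf ⟨i+1, hin⟩ := (hj ⟨i+1, hin⟩).1
    · simp only [hudef, hvdef, dif_pos hi, dif_pos hin]
      calc rf ⟨i, hi⟩ ≤ t (⟨i, hi⟩ : Fin n).succ := (hj ⟨i, hi⟩).2.1
        _ = t (⟨i+1, hin⟩ : Fin n).castSucc := by rw [hsc]
        _ ≤ rg ⟨i+1, hin⟩ := (hj ⟨i+1, hin⟩).2.2.1
  have huval : ∀ i : Fin n, X - C (rf i) = X - C (u i.val) := by
    intro i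
    simp only [hudef, dif_pos i.isLt, Fin.eta]
  have hvval : ∀ i : Fin n, X - C (rg i) = X - C (v i.val) := by
    intro i
    simp only [hvdef, dif_pos i.isLt, Fin.eta]
  have hfe : f = ∏ k ∈ Finset.range n, (X - C (u k)) := by
    have h1 := hfs.eq_prod_roots_of_monic hf
    rw [hfr, Multiset.map_map] at h1
    rw [h1, ← Fin.prod_univ_eq_prod_range (fun k => X - C (u k)) n,
      Finset.prod_eq_multiset_prod]
    congr 1
    apply Multiset.map_congr rfl
    intro i _
    exact huval i
  have hge : g = ∏ k ∈ Finset.range n, (X - C (v k)) := by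
    have h1 := hgs.eq_prod_roots_of_monic hg
    rw [hgr, Multiset.map_map] at h1
    rw [h1, ← Fin.prod_univ_eq_prod_range (fun k => X - C (v k)) n,
      Finset.prod_eq_multiset_prod]
    congr 1
    apply Multiset.map_congr rfl
    intro i _
    exact hvval i
  rw [hfe, hge]
  exact main_comb l h0 h1 n u v hu hv hx
end

section
/- In a finite rooted tree where each node k carries a real-rooted monic polynomial p_k of fixed degree, where each non-leaf polynomial is a positive convex combination of its children's polynomials, and where polynomials at siblings pairwise have common interlacings, there exists a leaf l whose polynomial's largest root is at most the largest root of the root node's polynomial. -/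
open Polynomial

lemma eval_eq_prod_roots_aux {p : Polynomial ℝ} (hm : p.Monic)
    (hs : (p.map (RingHom.id ℝ)).Splits) (x : ℝ) :
    p.eval x = (p.roots.map (fun r => x - r)).prod := by
  conv_lhs => rw [← Polynomial.prod_multiset_X_sub_C_of_monic_of_roots_card_eq hm
    (Polynomial.splits_iff_card_roots.mp (by rw [Polynomial.map_id] at hs; exact hs))]
  rw [Polynomial.eval_multiset_prod, Multiset.map_map]
  congr 1
  apply Multiset.map_congr rfl
  intro r _
  simp

/-- In a finite rooted tree (encoded by a parent map and a depth function)
carrying monic real-rooted degree-`n` polynomials, where each non-leaf's polynomial is a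
positive convex combination of the polynomials of its children, and polynomials at distinct
siblings have common interlacings, there is a leaf `l` whose polynomial's largest root is at
most the largest root of the polynomial at the root (i.e. every root of the leaf polynomial
is at most some root of the root polynomial). -/
theorem stmt_10 (n : ℕ) (V : Type) [Fintype V] [DecidableEq V]
    (root : V) (parent : V → V) (hroot : parent root = root)
    (depth : V → ℕ) (hdepth0 : depth root = 0)
    (hdepth : ∀ v, v ≠ root → depth v = depth (parent v) + 1)
    (pol : V → Polynomial ℝ)
    (hmonic : ∀ v, (pol v).Monic) (hdeg : ∀ v, (pol v).natDegree = n)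
    (hsplit : ∀ v, ((pol v).map (RingHom.id ℝ)).Splits)
    (hmix : ∀ v, (∃ w, w ≠ root ∧ parent w = v) →
      ∃ c : V → ℝ,
        (∀ w, w ≠ root → parent w = v → 0 < c w) ∧
        (∑ w ∈ Finset.univ.filter fun w => w ≠ root ∧ parent w = v, c w) = 1 ∧
        pol v = ∑ w ∈ Finset.univ.filter fun w => w ≠ root ∧ parent w = v, c w • pol w)
    (hsib : ∀ v w, v ≠ root → w ≠ root → parent v = parent w → v ≠ w →
      CommonInterlacing n (pol v) (pol w)) :
    ∃ l : V, (∀ w, w ≠ root → parent w ≠ l) ∧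
      ∀ x ∈ (pol l).roots, ∃ y ∈ (pol root).roots, x ≤ y := by
  obtain ⟨N, hNmax⟩ : ∃ N, ∀ v : V, depth v ≤ N := by
    obtain ⟨l, -, hl⟩ := Finset.exists_max_image Finset.univ depth ⟨root, Finset.mem_univ _⟩
    exact ⟨depth l, fun v => hl v (Finset.mem_univ _)⟩
  have hcard : ∀ v, Multiset.card (pol v).roots = n := fun v => by
    rw [Polynomial.splits_iff_card_roots.mp (by have h := hsplit v; rw [Polynomial.map_id] at h; exact h), hdeg v]
  rcases n with _ | m
  · -- n = 0 : roots are empty, only need existence of a leaf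
    obtain ⟨l, -, hl⟩ := Finset.exists_max_image Finset.univ depth ⟨root, Finset.mem_univ _⟩
    refine ⟨l, ?_, ?_⟩
    · intro w hw hpw
      have h1 := hdepth w hw
      rw [hpw] at h1
      have h2 := hl w (Finset.mem_univ _)
      omega
    · intro x hx
      have h0 := hcard l
      rw [Multiset.card_eq_zero] at h0
      rw [h0] at hx
      simp at hx
  · -- n = m + 1
    have hne : ∀ v, (pol v).roots.toFinset.Nonempty := fun v => by
      rw [Multiset.toFinset_nonempty]
      intro h
      have := hcard v
      rw [h] at this
      simp at this
    set mr : V → ℝ := fun v => (pol v).roots.toFinset.max' (hne v) with hmrdef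
    have mr_mem : ∀ v, mr v ∈ (pol v).roots := fun v =>
      Multiset.mem_toFinset.mp (Finset.max'_mem _ _)
    have mr_le : ∀ v, ∀ x ∈ (pol v).roots, x ≤ mr v := fun v x hx =>
      Finset.le_max' _ _ (Multiset.mem_toFinset.mpr hx)
    have mr_eq : ∀ v (r : Fin (m + 1) → ℝ), Monotone r →
        (pol v).roots = Multiset.map r Finset.univ.val → mr v = r (Fin.last m) := by
      intro v r hmono hroots
      apply le_antisymm
      · have hmem : mr v ∈ Multiset.map r Finset.univ.val := by rw [← hroots]; exact mr_mem v
        obtain ⟨k, -, hk⟩ := Multiset.mem_map.mp hmem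
        rw [← hk]
        exact hmono (Fin.le_last k)
      · apply mr_le
        rw [hroots]
        exact Multiset.mem_map.mpr ⟨Fin.last m, by simp, rfl⟩
    have heval : ∀ v x, (pol v).eval x = ((pol v).roots.map (fun r => x - r)).prod :=
      fun v x => eval_eq_prod_roots_aux (hmonic v) (hsplit v) x
    -- key step: each non-leaf has a child whose max root is below some root of the parent
    have key : ∀ v, (∃ w, w ≠ root ∧ parent w = v) →
        ∃ w, w ≠ root ∧ parent w = v ∧ ∃ y ∈ (pol v).roots, mr w ≤ y := by
      intro v hv
      obtain ⟨c, hcpos, hcsum, hceq⟩ := hmix v hv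
      set S := Finset.univ.filter (fun w => w ≠ root ∧ parent w = v) with hS
      have hSne : S.Nonempty := by
        obtain ⟨w, hw1, hw2⟩ := hv
        exact ⟨w, by simp [hS, hw1, hw2]⟩
      obtain ⟨i0, hi0S, hi0min⟩ := Finset.exists_min_image S mr hSne
      obtain ⟨hi0r, hi0p⟩ : i0 ≠ root ∧ parent i0 = v := by simpa [hS] using hi0S
      set lam := mr i0 with hlam
      have hch : ∀ j ∈ S, (pol j).eval lam ≤ 0 := by
        intro j hjS
        obtain ⟨hjr, hjp⟩ : j ≠ root ∧ parent j = v := by simpa [hS] using hjS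
        by_cases hji : j = i0
        · subst hji
          have hr : (pol j).IsRoot lam := Polynomial.isRoot_of_mem_roots (mr_mem j)
          rw [hr]
        · obtain ⟨t, ht, rf, rg, hrf, hrg, hfro, hgro, hbd⟩ :=
            hsib i0 j hi0r hjr (by rw [hi0p, hjp]) (fun h => hji h.symm)
          have h1 : lam = rf (Fin.last m) := mr_eq i0 rf hrf hfro
          have h2 : mr j = rg (Fin.last m) := mr_eq j rg hrg hgro
          have hlam_le : lam ≤ rg (Fin.last m) := h2 ▸ hi0min j hjS
          rw [heval j lam, hgro, Multiset.map_map]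
          have hprod : (Multiset.map ((fun r => lam - r) ∘ rg) Finset.univ.val).prod
              = ∏ k : Fin (m + 1), (lam - rg k) := rfl
          rw [hprod, ← Finset.prod_erase_mul _ _ (Finset.mem_univ (Fin.last m))]
          apply mul_nonpos_of_nonneg_of_nonpos
          · apply Finset.prod_nonneg
            intro k hk
            have hkne : k ≠ Fin.last m := (Finset.mem_erase.mp hk).1
            have hklt : (k : ℕ) < m := by
              have := Fin.le_last k
              rw [Fin.le_def] at this
              have hne' : (k : ℕ) ≠ m := fun h => hkne (Fin.ext h)
              simp only [Fin.val_last] at this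
              omega
            have h3 : rg k ≤ t k.succ := (hbd k).2.2.2
            have h4 : t k.succ ≤ t (Fin.castSucc (Fin.last m)) := by
              apply ht
              rw [Fin.le_def]
              simp only [Fin.val_succ, Fin.coe_castSucc, Fin.val_last]
              omega
            have h5 : t (Fin.castSucc (Fin.last m)) ≤ rf (Fin.last m) := (hbd (Fin.last m)).1
            have : rg k ≤ lam := by rw [h1]; linarith
            linarith
          · linarith
      have hv0 : (pol v).eval lam ≤ 0 := by
        rw [hceq, Polynomial.eval_finset_sum]
        apply Finset.sum_nonpos
        intro j hj
        obtain ⟨hjr, hjp⟩ : j ≠ root ∧ parent j = v := by simpa [hS] using hj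
        have hc := hcpos j hjr hjp
        have hej := hch j hj
        simp only [Polynomial.eval_smul, smul_eq_mul]
        exact mul_nonpos_of_nonneg_of_nonpos (le_of_lt hc) hej
      have hex : ∃ y ∈ (pol v).roots, lam ≤ y := by
        by_contra h
        push_neg at h
        have hpos : 0 < (pol v).eval lam := by
          rw [heval]
          apply Multiset.prod_pos
          intro a ha
          obtain ⟨r, hr, rfl⟩ := Multiset.mem_map.mp ha
          have := h r hr
          linarith
        linarith
      obtain ⟨y, hy, hly⟩ := hex
      exact ⟨i0, hi0r, hi0p, y, hy, hly⟩
    -- descent induction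
    have main : ∀ k (v : V), N ≤ depth v + k →
        ∃ l, (∀ w, w ≠ root → parent w ≠ l) ∧
          ∀ x ∈ (pol l).roots, ∃ y ∈ (pol v).roots, x ≤ y := by
      intro k
      induction k with
      | zero =>
        intro v hvk
        refine ⟨v, ?_, fun x hx => ⟨x, hx, le_refl x⟩⟩
        intro w hw hpw
        have h1 := hdepth w hw
        rw [hpw] at h1
        have h2 := hNmax w
        omega
      | succ k ih =>
        intro v hvk
        by_cases hleaf : ∃ w, w ≠ root ∧ parent w = v
        · obtain ⟨w, hw1, hw2, y, hy, hwy⟩ := key v hleaf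
          have hdw : depth w = depth v + 1 := by rw [hdepth w hw1, hw2]
          obtain ⟨l, hl1, hl2⟩ := ih w (by omega)
          refine ⟨l, hl1, fun x hx => ?_⟩
          obtain ⟨z, hz, hxz⟩ := hl2 x hx
          exact ⟨y, hy, le_trans hxz (le_trans (mr_le w z hz) hwy)⟩
        · push_neg at hleaf
          exact ⟨v, fun w hw hpw => hleaf w hw hpw, fun x hx => ⟨x, hx, le_refl x⟩⟩
    have := main N root (by rw [hdepth0]; omega)
    exact this
end

section
/- Let Q be a Haar-random orthogonal m × m matrix, and let U, V be index subsets of equal size j. Then E[det(Q_{U,V})²] = 1/C(m, j), where C(m,j) is the binomial coefficient. -/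
open Matrix MeasureTheory

section AuxCB

open Finset Equiv


variable {R : Type} [CommRing R]

lemma orderEmbOfFin_congr {α : Type*} [LinearOrder α] {s t : Finset α} (hst : s = t) {k : ℕ}
    (hs : s.card = k) (ht : t.card = k) (i : Fin k) :
    s.orderEmbOfFin hs i = t.orderEmbOfFin ht i := by
  subst hst; rfl

section CB


variable {j m : ℕ}

lemma det_mul_expand (A : Matrix (Fin j) (Fin m) R) (B : Matrix (Fin m) (Fin j) R) :
    (A * B).det = ∑ r : Fin j → Fin m, (∏ i, A i (r i)) * (B.submatrix r id).det := by
  calc (A * B).det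
      = Matrix.detRowAlternating.toMultilinearMap (fun i => ∑ x : Fin m, A i x • B x) := by
        apply congrArg
        funext i k
        simp [Matrix.mul_apply, Finset.sum_apply]
    _ = ∑ r : Fin j → Fin m,
          Matrix.detRowAlternating.toMultilinearMap (fun i => A i (r i) • B (r i)) :=
        MultilinearMap.map_sum _ _
    _ = ∑ r : Fin j → Fin m, (∏ i, A i (r i)) * (B.submatrix r id).det := by
        refine Finset.sum_congr rfl fun r _ => ?_
        rw [MultilinearMap.map_smul_univ]
        rfl

/-- The permutation sorting an injective tuple. -/
noncomputable def permOf (r : Fin j → Fin m) (hr : Function.Injective r) : Equiv.Perm (Fin j) :=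
  Equiv.ofBijective
    (fun i => ((Finset.univ.image r).orderIsoOfFin
        (by simp [Finset.card_image_of_injective _ hr])).symm
        ⟨r i, Finset.mem_image_of_mem _ (Finset.mem_univ i)⟩)
    ((Finite.injective_iff_bijective).mp (fun a b hab => by
      have := congrArg (((Finset.univ.image r).orderIsoOfFin
        (by simp [Finset.card_image_of_injective _ hr]))) hab
      simp only [OrderIso.apply_symm_apply] at this
      exact hr (congrArg Subtype.val this)))

lemma permOf_spec (r : Fin j → Fin m) (hr : Function.Injective r)
    (h : (Finset.univ.image r).card = j) (i : Fin j) :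
    (Finset.univ.image r).orderEmbOfFin h (permOf r hr i) = r i := by
  unfold permOf
  rw [Equiv.ofBijective_apply, ← Finset.coe_orderIsoOfFin_apply]
  exact congrArg Subtype.val (OrderIso.apply_symm_apply _ _)

noncomputable def cbTerm (A : Matrix (Fin j) (Fin m) R) (B : Matrix (Fin m) (Fin j) R)
    (U : Finset (Fin m)) : R :=
  if h : U.card = j then
    (A.submatrix id (U.orderEmbOfFin h)).det * (B.submatrix (U.orderEmbOfFin h) id).det
  else 0

noncomputable def cbTermS (A : Matrix (Fin j) (Fin m) R) (B : Matrix (Fin m) (Fin j) R)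
    (p : Finset (Fin m) × Equiv.Perm (Fin j)) : R :=
  if h : p.1.card = j then
    ((Equiv.Perm.sign p.2 : ℤ) : R) *
      ((∏ i, A i (p.1.orderEmbOfFin h (p.2 i))) * (B.submatrix (p.1.orderEmbOfFin h) id).det)
  else 0

theorem cauchyBinet (A : Matrix (Fin j) (Fin m) R) (B : Matrix (Fin m) (Fin j) R) :
    (A * B).det = ∑ U ∈ Finset.powersetCard j (Finset.univ : Finset (Fin m)), cbTerm A B U := by
  classical
  rw [det_mul_expand]
  have h2 : ∑ r : Fin j → Fin m, (∏ i, A i (r i)) * (B.submatrix r id).det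
      = ∑ r ∈ Finset.univ.filter (fun r : Fin j → Fin m => Function.Injective r),
          (∏ i, A i (r i)) * (B.submatrix r id).det := by
    refine (Finset.sum_filter_of_ne fun r _ hne => ?_).symm
    by_contra hinj
    obtain ⟨a, b, hab, hne'⟩ := Function.not_injective_iff.mp hinj
    exact hne (by
      rw [Matrix.det_zero_of_row_eq hne' (funext fun k => by
        simp only [Matrix.submatrix_apply, hab]), mul_zero])
  rw [h2]
  have h3 : ∑ r ∈ Finset.univ.filter (fun r : Fin j → Fin m => Function.Injective r),
        (∏ i, A i (r i)) * (B.submatrix r id).det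
      = ∑ p ∈ (Finset.powersetCard j (Finset.univ : Finset (Fin m))) ×ˢ
          (Finset.univ : Finset (Equiv.Perm (Fin j))), cbTermS A B p := by
    refine Finset.sum_bij'
      (i := fun r hr => (Finset.univ.image r,
        permOf r (Finset.mem_filter.mp hr).2))
      (j := fun p hp => (p.1.orderEmbOfFin
        ((Finset.mem_powersetCard_univ.mp (Finset.mem_product.mp hp).1)) : Fin j → Fin m) ∘ p.2)
      ?_ ?_ ?_ ?_ ?_
    · intro r hr
      refine Finset.mem_product.mpr ⟨Finset.mem_powersetCard_univ.mpr ?_, Finset.mem_univ _⟩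
      simp [Finset.card_image_of_injective _ (Finset.mem_filter.mp hr).2]
    · intro p hp
      refine Finset.mem_filter.mpr ⟨Finset.mem_univ _, ?_⟩
      exact ((p.1.orderEmbOfFin _).injective).comp p.2.injective
    · -- left inverse : j (i r) = r
      intro r hr
      funext i
      exact permOf_spec r (Finset.mem_filter.mp hr).2 _ i
    · -- right inverse : i (j p) = p
      intro p hp
      obtain ⟨hp1, -⟩ := Finset.mem_product.mp hp
      have hcard := Finset.mem_powersetCard_univ.mp hp1
      have himg : Finset.univ.image ((p.1.orderEmbOfFin hcard : Fin j → Fin m) ∘ p.2) = p.1 := by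
        ext x
        simp only [Finset.mem_image, Finset.mem_univ, true_and, Function.comp_apply]
        constructor
        · rintro ⟨i, rfl⟩; exact Finset.orderEmbOfFin_mem _ _ _
        · intro hx
          have : x ∈ Set.range (p.1.orderEmbOfFin hcard) := by
            rw [Finset.range_orderEmbOfFin]; exact hx
          obtain ⟨k, rfl⟩ := this
          exact ⟨p.2.symm k, by simp⟩
      refine Prod.ext himg (Equiv.ext fun i => ?_)
      simp only [permOf, Equiv.ofBijective_apply]
      rw [OrderIso.symm_apply_eq]
      refine Subtype.ext ?_
      rw [Finset.coe_orderIsoOfFin_apply]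
      exact (orderEmbOfFin_congr himg _ hcard (p.2 i)).symm
    · intro r hr
      have hinj := (Finset.mem_filter.mp hr).2
      have hU : (Finset.univ.image r).card = j := by
        simp [Finset.card_image_of_injective _ hinj]
      have hre : r = ⇑((Finset.univ.image r).orderEmbOfFin hU) ∘ ⇑(permOf r hinj) := by
        funext i; exact (permOf_spec r hinj hU i).symm
      have hdet2 : (B.submatrix (⇑((Finset.univ.image r).orderEmbOfFin hU) ∘ ⇑(permOf r hinj))
            id).det
          = ((Equiv.Perm.sign (permOf r hinj) : ℤ) : R) *
            (B.submatrix (⇑((Finset.univ.image r).orderEmbOfFin hU)) id).det := by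
        rw [← Matrix.det_permute, Matrix.submatrix_submatrix]
        simp
      rw [cbTermS, dif_pos hU]
      conv_lhs => rw [hre]
      rw [hdet2]
      simp only [Function.comp_apply]
      ring
  rw [h3, Finset.sum_product]
  refine Finset.sum_congr rfl fun U hU => ?_
  have hcard := Finset.mem_powersetCard_univ.mp hU
  rw [cbTerm, dif_pos hcard]
  have hdet : (A.submatrix id (U.orderEmbOfFin hcard)).det
      = ∑ σ : Equiv.Perm (Fin j), ((Equiv.Perm.sign σ : ℤ) : R) *
          ∏ i, A i (U.orderEmbOfFin hcard (σ i)) := by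
    rw [← Matrix.det_transpose, Matrix.det_apply']
    refine Finset.sum_congr rfl fun σ _ => ?_
    congr 1
  rw [hdet, Finset.sum_mul]
  refine Finset.sum_congr rfl fun σ _ => ?_
  rw [cbTermS, dif_pos hcard]
  ring

end CB

/-- The minor of `M` with rows `U` and columns `V` (in increasing order), defined to be `0`
if `U` and `V` have different cardinalities. -/
noncomputable def minorDet {m : ℕ} {R : Type} [CommRing R]
    (M : Matrix (Fin m) (Fin m) R) (U V : Finset (Fin m)) : R :=
  if h : V.card = U.card then
    (M.submatrix (U.orderEmbOfFin rfl) (V.orderEmbOfFin h)).det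
  else 0

lemma minorDet_eq {m j : ℕ} {R : Type} [CommRing R] (M : Matrix (Fin m) (Fin m) R)
    {U V : Finset (Fin m)} (hU : U.card = j) (hV : V.card = j) :
    minorDet M U V = (M.submatrix (U.orderEmbOfFin hU) (V.orderEmbOfFin hV)).det := by
  subst hU
  rw [minorDet, dif_pos hV]

lemma sum_minorDet_sq {m j : ℕ} (Q : Matrix (Fin m) (Fin m) ℝ) (hQ : Qᵀ * Q = 1)
    {V : Finset (Fin m)} (hV : V.card = j) :
    ∑ U ∈ Finset.powersetCard j (Finset.univ : Finset (Fin m)), (minorDet Q U V) ^ 2 = 1 := by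
  classical
  set e := V.orderEmbOfFin hV with he
  set B : Matrix (Fin m) (Fin j) ℝ := Q.submatrix id e with hB
  have hAB : Bᵀ * B = 1 := by
    ext k l
    have h1 := congrFun (congrFun hQ (e k)) (e l)
    simp only [Matrix.mul_apply, Matrix.transpose_apply, Matrix.submatrix_apply, hB, id] at h1 ⊢
    rw [h1]
    simp [Matrix.one_apply, EmbeddingLike.apply_eq_iff_eq]
  have h1 : (Bᵀ * B).det = 1 := by rw [hAB, Matrix.det_one]
  rw [cauchyBinet] at h1
  rw [← h1]
  refine Finset.sum_congr rfl fun U hU => ?_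
  have hUc := Finset.mem_powersetCard_univ.mp hU
  rw [minorDet_eq Q hUc hV, cbTerm, dif_pos hUc]
  have e1 : Bᵀ.submatrix id (U.orderEmbOfFin hUc) = (Q.submatrix (U.orderEmbOfFin hUc) e)ᵀ := by
    ext a b; simp [hB]
  have e2 : B.submatrix (U.orderEmbOfFin hUc) id = Q.submatrix (U.orderEmbOfFin hUc) e := by
    ext a b; simp [hB]
  rw [e1, e2, Matrix.det_transpose]
  ring

lemma entry_abs_le {m : ℕ} (Q : Matrix (Fin m) (Fin m) ℝ) (hQ : Qᵀ * Q = 1) (a b : Fin m) :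
    |Q a b| ≤ 1 := by
  have h1 := congrFun (congrFun hQ b) b
  simp only [Matrix.mul_apply, Matrix.transpose_apply, Matrix.one_apply_eq] at h1
  refine abs_le_one_iff_mul_self_le_one.mpr ?_
  rw [← h1]
  exact Finset.single_le_sum (f := fun x => Q x b * Q x b)
    (fun x _ => mul_self_nonneg _) (Finset.mem_univ a)

lemma det_abs_le {k : ℕ} (M : Matrix (Fin k) (Fin k) ℝ) (h : ∀ a b, |M a b| ≤ 1) :
    |M.det| ≤ ((Nat.factorial k : ℕ) : ℝ) := by
  rw [Matrix.det_apply']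
  calc |∑ σ : Equiv.Perm (Fin k), ((Equiv.Perm.sign σ : ℤ) : ℝ) * ∏ i, M (σ i) i|
      ≤ ∑ σ : Equiv.Perm (Fin k), |((Equiv.Perm.sign σ : ℤ) : ℝ) * ∏ i, M (σ i) i| :=
        Finset.abs_sum_le_sum_abs _ _
    _ ≤ ∑ _σ : Equiv.Perm (Fin k), (1 : ℝ) := by
        refine Finset.sum_le_sum fun σ _ => ?_
        rw [abs_mul]
        have h1 : |((Equiv.Perm.sign σ : ℤ) : ℝ)| = 1 := by
          rcases Int.units_eq_one_or (Equiv.Perm.sign σ) with h' | h' <;> simp [h']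
        rw [h1, one_mul, Finset.abs_prod]
        calc ∏ i, |M (σ i) i| ≤ ∏ _i : Fin k, (1 : ℝ) :=
              Finset.prod_le_prod (fun _ _ => abs_nonneg _) (fun i _ => h _ _)
          _ = 1 := by simp
    _ = ((Nat.factorial k : ℕ) : ℝ) := by simp [Finset.card_univ, Fintype.card_perm]

lemma minorDet_abs_le {m j : ℕ} (Q : Matrix (Fin m) (Fin m) ℝ) (hQ : Qᵀ * Q = 1)
    {U V : Finset (Fin m)} (hU : U.card = j) (hV : V.card = j) :
    |minorDet Q U V| ≤ ((Nat.factorial j : ℕ) : ℝ) := by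
  rw [minorDet_eq Q hU hV]
  exact det_abs_le _ fun a b => entry_abs_le Q hQ _ _

section Main

variable {m j : ℕ}

lemma coe_transpose_mul_self (Q : Matrix.orthogonalGroup (Fin m) ℝ) :
    (Q : Matrix (Fin m) (Fin m) ℝ)ᵀ * (Q : Matrix (Fin m) (Fin m) ℝ) = 1 := by
  have h := Matrix.UnitaryGroup.star_mul_self Q
  have hs : star (Q : Matrix (Fin m) (Fin m) ℝ) = (Q : Matrix (Fin m) (Fin m) ℝ)ᵀ := by
    ext a b; simp [Matrix.star_apply]
  rwa [hs] at h

lemma measurableMul_orthogonal [MeasurableSpace (Matrix.orthogonalGroup (Fin m) ℝ)]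
    [BorelSpace (Matrix.orthogonalGroup (Fin m) ℝ)] :
    MeasurableMul (Matrix.orthogonalGroup (Fin m) ℝ) := by
  constructor
  · intro c
    have hc : Continuous fun x : Matrix.orthogonalGroup (Fin m) ℝ => c * x := by
      refine continuous_induced_rng.mpr ?_
      exact (continuous_const (y := (c : Matrix (Fin m) (Fin m) ℝ))).matrix_mul
        continuous_subtype_val
    exact hc.measurable
  · intro c
    have hc : Continuous fun x : Matrix.orthogonalGroup (Fin m) ℝ => x * c := by
      refine continuous_induced_rng.mpr ?_
      exact continuous_subtype_val.matrix_mul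
        (continuous_const (y := (c : Matrix (Fin m) (Fin m) ℝ)))
    exact hc.measurable


lemma exists_tau (U W : Finset (Fin m)) (hU : U.card = j) (hW : W.card = j) :
    ∃ τ : Equiv.Perm (Fin m), ∀ k : Fin j, τ (U.orderEmbOfFin hU k) = W.orderEmbOfFin hW k := by
  classical
  have hcc : Fintype.card ((Uᶜ : Finset (Fin m)) : Type) =
      Fintype.card ((Wᶜ : Finset (Fin m)) : Type) := by
    simp [Fintype.card_coe, Finset.card_compl, hU, hW]
  set e : {x // x ∈ U} ≃ {x // x ∈ W} :=
    ((U.orderIsoOfFin hU).symm.trans (W.orderIsoOfFin hW)).toEquiv with he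
  set f : {x // ¬ x ∈ U} ≃ {x // ¬ x ∈ W} :=
    (Equiv.subtypeEquivRight (fun x => (Finset.mem_compl (s := U) (a := x)).symm)).trans
      ((Fintype.equivOfCardEq hcc).trans
        (Equiv.subtypeEquivRight fun x => Finset.mem_compl)) with hf
  refine ⟨Equiv.subtypeCongr e f, fun k => ?_⟩
  have hmem : U.orderEmbOfFin hU k ∈ U := Finset.orderEmbOfFin_mem _ _ _
  have happ : Equiv.subtypeCongr e f (U.orderEmbOfFin hU k) =
      ((e ⟨U.orderEmbOfFin hU k, hmem⟩ : {y // y ∈ W}) : Fin m) := by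
    simp only [Equiv.subtypeCongr, Equiv.trans_apply,
      Equiv.sumCompl_symm_apply_of_pos hmem, Equiv.sumCongr_apply, Sum.map_inl,
      Equiv.sumCompl_apply_inl]
  rw [happ]
  have h2 : (U.orderIsoOfFin hU).symm ⟨U.orderEmbOfFin hU k, hmem⟩ = k := by
    rw [OrderIso.symm_apply_eq]
    exact Subtype.ext (Finset.coe_orderIsoOfFin_apply _ _ _).symm
  show ((W.orderIsoOfFin hW) ((U.orderIsoOfFin hU).symm ⟨U.orderEmbOfFin hU k, hmem⟩) : Fin m) = _
  rw [h2, Finset.coe_orderIsoOfFin_apply]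

lemma perm_orthogonal (τ : Equiv.Perm (Fin m)) :
    (1 : Matrix (Fin m) (Fin m) ℝ).submatrix (⇑τ) id ∈ Matrix.orthogonalGroup (Fin m) ℝ := by
  rw [Matrix.mem_unitaryGroup_iff]
  have hstar : star ((1 : Matrix (Fin m) (Fin m) ℝ).submatrix (⇑τ) id)
      = (1 : Matrix (Fin m) (Fin m) ℝ).submatrix id (⇑τ) := by
    ext a b
    simp [Matrix.star_apply, Matrix.submatrix_apply, Matrix.one_apply, eq_comm]
  rw [hstar]
  calc (1 : Matrix (Fin m) (Fin m) ℝ).submatrix (⇑τ) id *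
        (1 : Matrix (Fin m) (Fin m) ℝ).submatrix id (⇑τ)
      = (1 : Matrix (Fin m) (Fin m) ℝ).submatrix (⇑τ) ⇑(Equiv.refl (Fin m)) *
        (1 : Matrix (Fin m) (Fin m) ℝ).submatrix (⇑(Equiv.refl (Fin m))) (⇑τ) := by
        rw [Equiv.coe_refl]
    _ = ((1 * 1 : Matrix (Fin m) (Fin m) ℝ)).submatrix (⇑τ) (⇑τ) :=
        Matrix.submatrix_mul_equiv _ _ _ _ _
    _ = 1 := by rw [one_mul, Matrix.submatrix_one_equiv]

lemma perm_mul (τ : Equiv.Perm (Fin m)) (M : Matrix (Fin m) (Fin m) ℝ) :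
    (1 : Matrix (Fin m) (Fin m) ℝ).submatrix (⇑τ) id * M = M.submatrix (⇑τ) id := by
  calc (1 : Matrix (Fin m) (Fin m) ℝ).submatrix (⇑τ) id * M
      = (1 : Matrix (Fin m) (Fin m) ℝ).submatrix (⇑τ) ⇑(Equiv.refl (Fin m)) *
        M.submatrix (⇑(Equiv.refl (Fin m))) id := by
        rw [Equiv.coe_refl, Matrix.submatrix_id_id]
    _ = ((1 * M)).submatrix (⇑τ) id := Matrix.submatrix_mul_equiv _ _ _ _ _
    _ = M.submatrix (⇑τ) id := by rw [one_mul]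

/-- For a Haar-random orthogonal `m × m` matrix `Q` and index subsets `U`, `V`
of equal size `j`, `E[det(Q_{U,V})²] = 1 / C(m, j)`. -/
theorem stmt_16 (m j : ℕ)
    [MeasurableSpace (Matrix.orthogonalGroup (Fin m) ℝ)]
    [BorelSpace (Matrix.orthogonalGroup (Fin m) ℝ)]
    (μ : Measure (Matrix.orthogonalGroup (Fin m) ℝ))
    [μ.IsHaarMeasure] [IsProbabilityMeasure μ]
    (U V : Finset (Fin m)) (hU : U.card = j) (hV : V.card = j) :
    ∫ Q : Matrix.orthogonalGroup (Fin m) ℝ,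
        (minorDet (Q : Matrix (Fin m) (Fin m) ℝ) U V) ^ 2 ∂μ =
      1 / (m.choose j : ℝ) := by
  classical
  haveI : MeasurableMul (Matrix.orthogonalGroup (Fin m) ℝ) := measurableMul_orthogonal
  -- integrability of each minor squared
  have hint : ∀ W : Finset (Fin m), W.card = j →
      Integrable (fun Q : Matrix.orthogonalGroup (Fin m) ℝ =>
        minorDet (Q : Matrix (Fin m) (Fin m) ℝ) W V ^ 2) μ := by
    intro W hW
    have hfun : (fun Q : Matrix.orthogonalGroup (Fin m) ℝ =>
        minorDet (Q : Matrix (Fin m) (Fin m) ℝ) W V ^ 2) =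
        fun Q : Matrix.orthogonalGroup (Fin m) ℝ =>
          (((Q : Matrix (Fin m) (Fin m) ℝ)).submatrix
            (W.orderEmbOfFin hW) (V.orderEmbOfFin hV)).det ^ 2 := by
      funext Q; rw [minorDet_eq _ hW hV]
    have hcont : Continuous (fun Q : Matrix.orthogonalGroup (Fin m) ℝ =>
        minorDet (Q : Matrix (Fin m) (Fin m) ℝ) W V ^ 2) := by
      rw [hfun]
      exact ((continuous_subtype_val.matrix_submatrix _ _).matrix_det).pow 2
    refine Integrable.mono' (integrable_const (((Nat.factorial j : ℕ) : ℝ) ^ 2))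
      hcont.measurable.aestronglyMeasurable (Filter.Eventually.of_forall fun Q => ?_)
    rw [Real.norm_eq_abs, abs_pow]
    have hb := minorDet_abs_le (Q : Matrix (Fin m) (Fin m) ℝ) (coe_transpose_mul_self Q) hW hV
    exact pow_le_pow_left₀ (abs_nonneg _) hb 2
  -- invariance: every minor has the same expectation
  have hkey : ∀ W : Finset (Fin m), W.card = j →
      ∫ Q : Matrix.orthogonalGroup (Fin m) ℝ,
          minorDet (Q : Matrix (Fin m) (Fin m) ℝ) W V ^ 2 ∂μ
        = ∫ Q : Matrix.orthogonalGroup (Fin m) ℝ,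
          minorDet (Q : Matrix (Fin m) (Fin m) ℝ) U V ^ 2 ∂μ := by
    intro W hW
    obtain ⟨τ, hτ⟩ := exists_tau U W hU hW
    set p : Matrix.orthogonalGroup (Fin m) ℝ :=
      ⟨(1 : Matrix (Fin m) (Fin m) ℝ).submatrix (⇑τ) id, perm_orthogonal τ⟩ with hp
    have hpw : ∀ Q : Matrix.orthogonalGroup (Fin m) ℝ,
        minorDet ((p * Q : Matrix.orthogonalGroup (Fin m) ℝ) : Matrix (Fin m) (Fin m) ℝ) U V
          = minorDet (Q : Matrix (Fin m) (Fin m) ℝ) W V := by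
      intro Q
      have h1 : ((p * Q : Matrix.orthogonalGroup (Fin m) ℝ) : Matrix (Fin m) (Fin m) ℝ)
          = (Q : Matrix (Fin m) (Fin m) ℝ).submatrix (⇑τ) id := perm_mul τ _
      rw [h1, minorDet_eq _ hU hV, minorDet_eq _ hW hV]
      congr 1
      ext a b
      simp [Matrix.submatrix_apply, hτ a]
    calc ∫ Q : Matrix.orthogonalGroup (Fin m) ℝ,
            minorDet (Q : Matrix (Fin m) (Fin m) ℝ) W V ^ 2 ∂μ
        = ∫ Q : Matrix.orthogonalGroup (Fin m) ℝ,
            minorDet ((p * Q : Matrix.orthogonalGroup (Fin m) ℝ) : Matrix (Fin m) (Fin m) ℝ)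
              U V ^ 2 ∂μ := by
          refine integral_congr_ae (Filter.Eventually.of_forall fun Q => ?_)
          show minorDet ((Q : Matrix (Fin m) (Fin m) ℝ)) W V ^ 2
              = minorDet ((p * Q : Matrix.orthogonalGroup (Fin m) ℝ) :
                  Matrix (Fin m) (Fin m) ℝ) U V ^ 2
          rw [hpw Q]
      _ = ∫ Q : Matrix.orthogonalGroup (Fin m) ℝ,
            minorDet (Q : Matrix (Fin m) (Fin m) ℝ) U V ^ 2 ∂μ :=
          integral_mul_left_eq_self
            (fun Q : Matrix.orthogonalGroup (Fin m) ℝ =>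
              minorDet (Q : Matrix (Fin m) (Fin m) ℝ) U V ^ 2) p
  -- summing over all row sets
  have hsum : ∑ W ∈ Finset.powersetCard j (Finset.univ : Finset (Fin m)),
      ∫ Q : Matrix.orthogonalGroup (Fin m) ℝ,
        minorDet (Q : Matrix (Fin m) (Fin m) ℝ) W V ^ 2 ∂μ = 1 := by
    rw [← integral_finset_sum _
      (fun W hW => hint W (Finset.mem_powersetCard_univ.mp hW))]
    have hone : ∀ Q : Matrix.orthogonalGroup (Fin m) ℝ,
        ∑ W ∈ Finset.powersetCard j (Finset.univ : Finset (Fin m)),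
          minorDet (Q : Matrix (Fin m) (Fin m) ℝ) W V ^ 2 = 1 := fun Q =>
      sum_minorDet_sq _ (coe_transpose_mul_self Q) hV
    rw [integral_congr_ae (Filter.Eventually.of_forall hone)]
    simp
  have hcardS : (Finset.powersetCard j (Finset.univ : Finset (Fin m))).card = m.choose j := by
    rw [Finset.card_powersetCard, Finset.card_univ, Fintype.card_fin]
  have hconst : ∑ W ∈ Finset.powersetCard j (Finset.univ : Finset (Fin m)),
      ∫ Q : Matrix.orthogonalGroup (Fin m) ℝ,
        minorDet (Q : Matrix (Fin m) (Fin m) ℝ) W V ^ 2 ∂μ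
      = (m.choose j : ℝ) * ∫ Q : Matrix.orthogonalGroup (Fin m) ℝ,
          minorDet (Q : Matrix (Fin m) (Fin m) ℝ) U V ^ 2 ∂μ := by
    rw [Finset.sum_congr rfl (fun W hW => hkey W (Finset.mem_powersetCard_univ.mp hW)),
      Finset.sum_const, hcardS, nsmul_eq_mul]
  rw [hconst] at hsum
  have hC : (0 : ℝ) < (m.choose j : ℝ) := by
    have hjm : j ≤ m := by
      rw [← hU]
      calc U.card ≤ (Finset.univ : Finset (Fin m)).card := Finset.card_le_univ U
        _ = m := by rw [Finset.card_univ, Fintype.card_fin]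
    exact_mod_cast Nat.choose_pos hjm
  field_simp
  linarith


end Main
end AuxCB
end
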